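/- Let q be a power of a prime p, let s be a prime and t ≥ 2 an integer, and suppose (q^{s^t} − 1)/(q − 1) is a power of a prime r. Then q^{s^t} − 1 has no primitive prime divisor; consequently, by Zsigmondy's theorem, either q = 2 and s^t = 6, or s^t = 2 and q is a Mersenne prime — and since t ≥ 2 and s is prime, both alternatives are impossible. Hence (q^{s^t} − 1)/(q − 1) is never a prime power when t ≥ 2. -/

import Mathlib

/-!
Write `n = s²k`, `m = ks` and `Q = q^m = (q^k)^s`. Then `∑_{i<n} q^i = A · B` with
`A = ∑_{i<m} q^i` and `B = ∑_{j<s} Q^j`. If this is `r^ℓ`, both factors are powers of `r` larger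
than `1`, so `r ∣ A ∣ Q - 1`; hence `B ≡ s [MOD r]` and `r = s`. By Fermat `q^k ≡ 1 [MOD s]`, so
`Q ≡ 1 [MOD s²]` and `B ≡ s [MOD s²]`, which is impossible for `B = s^b > s`.
-/

open SimpleGraph

/-- Vertex type of the bipartite divisor graph of a set of naturals:
the disjoint union of `X` and of the primes dividing some element of `X`. -/
abbrev BDGVert (X : Set ℕ) : Type :=
  {x : ℕ // x ∈ X} ⊕ {p : ℕ // p.Prime ∧ ∃ x ∈ X, p ∣ x}

/-- The bipartite divisor graph `B(X)`: a prime `p` is adjacent to `x ∈ X` iff `p ∣ x`. -/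
def bdg (X : Set ℕ) : SimpleGraph (BDGVert X) :=
  SimpleGraph.fromRel (fun a b =>
    match a, b with
    | Sum.inr p, Sum.inl x => p.1 ∣ x.1
    | _, _ => False)

/-- The prime graph `Δ(X)`: primes `p ≠ q` are adjacent iff `pq` divides some element of `X`. -/
def primeGraph (X : Set ℕ) : SimpleGraph {p : ℕ // p.Prime ∧ ∃ x ∈ X, p ∣ x} :=
  SimpleGraph.fromRel (fun p q => ∃ x ∈ X, p.1 * q.1 ∣ x)

/-- The common divisor graph `Γ(X)`: distinct `x, y ∈ X` are adjacent iff `gcd(x,y) ≠ 1`. -/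
def cdGraph (X : Set ℕ) : SimpleGraph {x : ℕ // x ∈ X} :=
  SimpleGraph.fromRel (fun a b => Nat.gcd a.1 b.1 ≠ 1)

/-- The set of irreducible complex character degrees of a group `G`. -/
def charDegrees (G : Type) [Group G] : Set ℕ :=
  {n | ∃ V : FDRep ℂ G, CategoryTheory.Simple V ∧ Module.finrank ℂ V = n}

/-- Disjoint union of two simple graphs. -/
def disjUnionGraph {α β : Type*} (G : SimpleGraph α) (H : SimpleGraph β) :
    SimpleGraph (α ⊕ β) where
  Adj a b :=
    match a, b with
    | Sum.inl x, Sum.inl y => G.Adj x y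
    | Sum.inr x, Sum.inr y => H.Adj x y
    | _, _ => False
  symm := by
    constructor; rintro (x | x) (y | y) h <;> simp_all <;> exact h.symm
  loopless := by
    constructor; rintro (x | x) h <;> simp_all

open Finset

theorem geom_sum_mul_geom_sum_pow {R : Type*} [CommSemiring R] (x : R) (m k : ℕ) :
    (∑ i ∈ range m, x ^ i) * ∑ j ∈ range k, (x ^ m) ^ j = ∑ i ∈ range (m * k), x ^ i := by
  induction k with
  | zero => simp
  | succ k ih =>
    rw [sum_range_succ, mul_add, ih, Nat.mul_succ, sum_range_add, sum_mul]
    simp only [← pow_mul, ← pow_add, add_comm]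

namespace Nat

theorem geom_sum_modEq_of_modEq_one {k x : ℕ} (h : x ≡ 1 [MOD k]) (n : ℕ) :
    ∑ j ∈ range n, x ^ j ≡ n [MOD k] := by
  rw [← ZMod.natCast_eq_natCast_iff] at h ⊢
  simp [h]

theorem pow_prime_modEq_one_sq_of_modEq_one {s y : ℕ} (hs : s.Prime) (h : y ^ s ≡ 1 [MOD s]) :
    y ^ s ≡ 1 [MOD s ^ 2] := by
  have : Fact s.Prime := ⟨hs⟩
  have hy : y ≡ 1 [MOD s] := by
    rw [← ZMod.natCast_eq_natCast_iff, Nat.cast_pow, ZMod.pow_card] at h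
    exact (ZMod.natCast_eq_natCast_iff _ _ _).1 h
  rw [Nat.modEq_iff_dvd] at hy ⊢
  simpa using dvd_sub_pow_of_dvd_sub hy 1

theorem geom_sum_pow_prime_ne_prime_pow {s y r b : ℕ} (hs : s.Prime) (hr : r.Prime) (hy : 2 ≤ y)
    (hry : y ^ s ≡ 1 [MOD r]) : ∑ j ∈ range s, (y ^ s) ^ j ≠ r ^ b := by
  intro hB
  set B := ∑ j ∈ range s, (y ^ s) ^ j
  have hsB : s < B := by
    have hys : 1 < y ^ s := Nat.one_lt_pow hs.ne_zero hy
    calc s = ∑ _j ∈ range s, 1 := by simp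
      _ < B := sum_lt_sum (fun j _ => Nat.one_le_pow _ _ (by omega))
        ⟨1, mem_range.2 hs.one_lt, by simpa using hys⟩
  have hrs : r = s := by
    have hb : b ≠ 0 := by
      rintro rfl
      have := hs.two_le
      rw [pow_zero] at hB
      omega
    have hBr : B ≡ 0 [MOD r] := by
      rw [hB]
      exact Nat.modEq_zero_iff_dvd.2 (dvd_pow_self r hb)
    exact (Nat.prime_dvd_prime_iff_eq hr hs).1
      (Nat.modEq_zero_iff_dvd.1 ((geom_sum_modEq_of_modEq_one hry s).symm.trans hBr))
  subst hrs
  have hb : 2 ≤ b := (Nat.pow_lt_pow_iff_right hr.one_lt).1 (by rwa [pow_one, ← hB])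
  have hBr : B ≡ 0 [MOD r ^ 2] := by
    rw [hB]
    exact Nat.modEq_zero_iff_dvd.2 (pow_dvd_pow r hb)
  have hBs : B ≡ r [MOD r ^ 2] :=
    geom_sum_modEq_of_modEq_one (pow_prime_modEq_one_sq_of_modEq_one hr hry) r
  have := Nat.le_of_dvd hr.pos (Nat.modEq_zero_iff_dvd.1 (hBs.symm.trans hBr))
  nlinarith [hr.two_le]

theorem geom_sum_ne_prime_pow_of_sq_dvd {q n s r ℓ : ℕ} (hq : 2 ≤ q) (hs : s.Prime)
    (hsn : s ^ 2 ∣ n) (hn : n ≠ 0) (hr : r.Prime) : ∑ i ∈ range n, q ^ i ≠ r ^ ℓ := by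
  obtain ⟨k, rfl⟩ := hsn
  have hk : k ≠ 0 := by rintro rfl; simp at hn
  intro h
  set A := ∑ i ∈ range (k * s), q ^ i
  have hsplit : A * ∑ j ∈ range s, ((q ^ k) ^ s) ^ j = r ^ ℓ := by
    rw [← pow_mul, geom_sum_mul_geom_sum_pow, ← h, sq]
    congr 2
    ring
  have hAq : A * (q - 1) = (q ^ k) ^ s - 1 := by
    rw [← pow_mul]
    exact geom_sum_mul_of_one_le (by omega) _
  obtain ⟨a, -, hA⟩ := (Nat.dvd_prime_pow hr).1 (Dvd.intro _ hsplit)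
  obtain ⟨b, -, hB⟩ := (Nat.dvd_prime_pow hr).1 (Dvd.intro_left _ hsplit)
  have ha : a ≠ 0 := by
    rintro rfl
    rw [hA, pow_zero, one_mul, ← pow_mul] at hAq
    have hks : 1 < k * s := by nlinarith [hs.two_le, Nat.one_le_iff_ne_zero.2 hk]
    have : q ^ 1 < q ^ (k * s) := Nat.pow_lt_pow_right hq hks
    rw [pow_one] at this
    omega
  have hry : (q ^ k) ^ s ≡ 1 [MOD r] :=
    ((Nat.modEq_iff_dvd' (Nat.one_le_pow _ _ (by positivity))).2
      (hAq ▸ (hA ▸ dvd_pow_self r ha).mul_right _)).symm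
  exact geom_sum_pow_prime_ne_prime_pow hs hr (Nat.one_lt_pow hk hq) hry hB

end Nat

theorem stmt4 (q s t : ℕ) (hq : IsPrimePow q) (hs : s.Prime) (ht : 2 ≤ t) :
    (∀ r : ℕ, r.Prime → (∃ ℓ : ℕ, (q ^ s ^ t - 1) / (q - 1) = r ^ ℓ) →
      ¬ ∃ z : ℕ, z.Prime ∧ z ∣ q ^ s ^ t - 1 ∧
        ∀ i : ℕ, 1 ≤ i → i < s ^ t → ¬ z ∣ q ^ i - 1) ∧
    (∀ r : ℕ, r.Prime → ∀ ℓ : ℕ, (q ^ s ^ t - 1) / (q - 1) ≠ r ^ ℓ) := by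
  have not_prime_pow : ∀ r : ℕ, r.Prime → ∀ ℓ : ℕ, (q ^ s ^ t - 1) / (q - 1) ≠ r ^ ℓ := by
    intro r hr ℓ
    rw [← Nat.geomSum_eq hq.two_le]
    exact Nat.geom_sum_ne_prime_pow_of_sq_dvd hq.two_le hs (pow_dvd_pow s ht)
      (pow_ne_zero _ hs.ne_zero) hr
  exact ⟨fun r hr ⟨ℓ, h⟩ _ => not_prime_pow r hr ℓ h, not_prime_pow⟩
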